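/- Chain representation of necessity measures on a finite algebra: a set function N on a finite algebra A with atoms C₁,…,C_m is a finitely minitive necessity measure if and only if there exist a permutation (i₁,…,i_m) of (1,…,m) and non-negative weights x₁,…,x_m summing to 1 such that, with D_r = C_{i₁}∪⋯∪C_{i_r}, N(A) = Σ_{r : D_r ⊆ A} x_r for every A ∈ A (i.e., the Möbius inverse of N is supported on the chain D₁ ⊆ D₂ ⊆ ⋯ ⊆ D_m = Ω). -/

import Mathlib

open scoped Classical

/-- `C` is an atom of the finite algebra `𝒜`. -/
def IsAtomOf {Ω : Type*} (𝒜 : Finset (Set Ω)) (C : Set Ω) : Prop :=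
  C ∈ 𝒜 ∧ C ≠ ∅ ∧ ∀ B ∈ 𝒜, B ⊆ C → B = ∅ ∨ B = C

/-! Sort the atoms so that `t ↦ N (C t)ᶜ` increases and let `D k` be the union of the first `k`
sorted atoms (indices below refer to the sorted order). Since `D k = ⋂_{t ≥ k} (C t)ᶜ`,
minitivity gives `N (D k) = N (C k)ᶜ` for `k < m`. If `k` is the largest index with `D k ⊆ A`,
then `A ⊆ (C k)ᶜ`, so `N A` is squeezed to `N (D k)`, which telescopes into the sum of the
increments `x r = N (D (r + 1)) - N (D r)`. Conversely, the sets `{r | D r ⊆ A}` are initial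
segments, hence nested, so sums of non-negative weights over them are minitive. -/

open Finset Function MeasureTheory

section

variable {Ω : Type*} {𝒜 : Finset (Set Ω)}

theorem IsAtomOf.subset_or_subset_compl (h𝒜 : IsSetAlgebra (𝒜 : Set (Set Ω))) {C B : Set Ω}
    (hC : IsAtomOf 𝒜 C) (hB : B ∈ 𝒜) : C ⊆ B ∨ C ⊆ Bᶜ := by
  rcases hC.2.2 _ (h𝒜.inter_mem hC.1 hB) Set.inter_subset_left with h | h
  · exact Or.inr (Set.subset_compl_iff_disjoint_right.2 (Set.disjoint_iff_inter_eq_empty.2 h))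
  · exact Or.inl (Set.inter_eq_left.1 h)

theorem IsAtomOf.disjoint (h𝒜 : IsSetAlgebra (𝒜 : Set (Set Ω))) {C C' : Set Ω}
    (hC : IsAtomOf 𝒜 C) (hC' : IsAtomOf 𝒜 C') (hne : C ≠ C') : Disjoint C C' := by
  refine (hC.subset_or_subset_compl h𝒜 hC'.1).elim (fun h => ?_)
    Set.subset_compl_iff_disjoint_right.1
  rcases hC'.2.2 C hC.1 h with h' | h'
  exacts [absurd h' hC.2.1, absurd h' hne]

theorem exists_isAtomOf_mem (h𝒜 : IsSetAlgebra (𝒜 : Set (Set Ω))) (ω : Ω) :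
    ∃ C, IsAtomOf 𝒜 C ∧ ω ∈ C := by
  set E := ⋂ B ∈ 𝒜.filter (ω ∈ ·), B
  have hωE : ω ∈ E := Set.mem_iInter₂.2 fun B hB => (mem_filter.1 hB).2
  have hE_sub : ∀ B ∈ 𝒜, ω ∈ B → E ⊆ B := fun B hB hωB =>
    Set.biInter_subset_of_mem (mem_filter.2 ⟨hB, hωB⟩)
  refine ⟨E, ⟨h𝒜.biInter_mem _ fun B hB => (mem_filter.1 hB).1,
    Set.nonempty_iff_ne_empty.1 ⟨ω, hωE⟩, fun B hB hBE => ?_⟩, hωE⟩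
  by_cases hωB : ω ∈ B
  · exact Or.inr (hBE.antisymm (hE_sub B hB hωB))
  · exact Or.inl (Set.subset_empty_iff.1 fun b hb => hE_sub _ (h𝒜.compl_mem hB) hωB (hBE hb) hb)

theorem iUnion_eq_univ_of_forall_isAtomOf (h𝒜 : IsSetAlgebra (𝒜 : Set (Set Ω))) {ι : Type*}
    {C : ι → Set Ω} (hall : ∀ A, IsAtomOf 𝒜 A → ∃ r, A = C r) : ⋃ r, C r = Set.univ :=
  Set.eq_univ_of_forall fun ω =>
    let ⟨A, hA, hωA⟩ := exists_isAtomOf_mem h𝒜 ω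
    let ⟨r, hr⟩ := hall A hA
    Set.mem_iUnion.2 ⟨r, hr ▸ hωA⟩

def IsMinitiveOn {β : Type*} [LinearOrder β] (N : Set Ω → β) (𝒜 : Finset (Set Ω)) : Prop :=
  ∀ A ∈ 𝒜, ∀ B ∈ 𝒜, N (A ∩ B) = min (N A) (N B)

namespace IsMinitiveOn

variable {β : Type*} [LinearOrder β] {N : Set Ω → β}

theorem mono (hN : IsMinitiveOn N 𝒜) {A B : Set Ω} (hA : A ∈ 𝒜) (hB : B ∈ 𝒜) (hAB : A ⊆ B) :
    N A ≤ N B := by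
  have h := hN A hA B hB
  rw [Set.inter_eq_left.2 hAB] at h
  exact h ▸ min_le_right _ _

theorem apply_biInter (hN : IsMinitiveOn N 𝒜) (h𝒜 : IsSetAlgebra (𝒜 : Set (Set Ω)))
    {ι : Type*} {s : Finset ι} (hs : s.Nonempty) {B : ι → Set Ω} (hB : ∀ i ∈ s, B i ∈ 𝒜) :
    N (⋂ i ∈ s, B i) = s.inf' hs (N ∘ B) := by
  induction hs using Finset.Nonempty.cons_induction with
  | singleton a => simp
  | cons a s ha hs ih =>
    have hB' : ∀ i ∈ s, B i ∈ 𝒜 := fun i hi => hB i (mem_cons_of_mem hi)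
    rw [inf'_cons hs, cons_eq_insert, set_biInter_insert, hN _ (hB a (mem_cons_self a s)) _
      (h𝒜.biInter_mem s hB'), ih hB']
    rfl

end IsMinitiveOn

section Chain

variable {m : ℕ} (P : Fin m → Set Ω)

-- The union of the first `k` blocks: the statement's `⋃ t ∈ Iic r, P t` is `chainSet P (r + 1)`.
def chainSet (k : ℕ) : Set Ω := ⋃ t : Fin m, ⋃ (_ : (t : ℕ) < k), P t

theorem chainSet_zero : chainSet P 0 = ∅ := by simp [chainSet]

theorem chainSet_mono : Monotone (chainSet P) := fun _ _ hkl =>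
  Set.iUnion_mono fun _ => Set.iUnion_subset fun ht =>
    Set.subset_iUnion_of_subset (ht.trans_le hkl) subset_rfl

theorem chainSet_subset_iff {k : ℕ} {A : Set Ω} :
    chainSet P k ⊆ A ↔ ∀ t : Fin m, (t : ℕ) < k → P t ⊆ A := by
  simp [chainSet]

theorem iUnion_Iic_eq_chainSet (r : Fin m) : ⋃ t ∈ Iic r, P t = chainSet P (r + 1) := by
  ext ω
  simp only [chainSet, Set.mem_iUnion, mem_Iic, exists_prop, Fin.le_iff_val_le_val,
    Nat.lt_succ_iff]

theorem chainSet_eq_univ (hcover : ⋃ t, P t = Set.univ) : chainSet P m = Set.univ := by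
  simp [chainSet, hcover]

theorem chainSet_eq_biInter_compl (hdisj : Pairwise (Disjoint on P))
    (hcover : ⋃ t, P t = Set.univ) (k : ℕ) :
    chainSet P k = ⋂ t ∈ univ.filter (fun t : Fin m => k ≤ t), (P t)ᶜ := by
  ext ω
  obtain ⟨s, hωs⟩ := Set.mem_iUnion.1 (hcover.symm ▸ Set.mem_univ ω)
  simp only [chainSet, Set.mem_iUnion, Set.mem_iInter, mem_filter, mem_univ, true_and,
    Set.mem_compl_iff, exists_prop]
  constructor
  · rintro ⟨t, htk, hωt⟩ u hku hωu
    exact Set.disjoint_left.1 (hdisj (Fin.ne_of_lt (Fin.lt_def.2 (htk.trans_le hku)))) hωt hωu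
  · intro h
    exact ⟨s, not_le.1 fun hks => h s hks hωs, hωs⟩

end Chain

theorem chainSet_mem (h𝒜 : IsSetAlgebra (𝒜 : Set (Set Ω))) {m : ℕ} {P : Fin m → Set Ω}
    (hP : ∀ t, P t ∈ 𝒜) (hdisj : Pairwise (Disjoint on P)) (hcover : ⋃ t, P t = Set.univ)
    (k : ℕ) : chainSet P k ∈ 𝒜 := by
  rw [chainSet_eq_biInter_compl P hdisj hcover]
  exact h𝒜.biInter_mem _ fun t _ => h𝒜.compl_mem (hP t)

section ChainIndex

variable {m : ℕ} {P : Fin m → Set Ω} {A : Set Ω}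

variable (P) in
noncomputable def chainIndex (A : Set Ω) : ℕ := Nat.findGreatest (fun k => chainSet P k ⊆ A) m

theorem chainIndex_le : chainIndex P A ≤ m := Nat.findGreatest_le m

theorem chainSet_chainIndex_subset : chainSet P (chainIndex P A) ⊆ A :=
  Nat.findGreatest_spec (P := fun k => chainSet P k ⊆ A) (Nat.zero_le m)
    (by simp only [chainSet_zero, Set.empty_subset])

theorem chainSet_succ_subset_iff (r : Fin m) :
    chainSet P (r + 1) ⊆ A ↔ (r : ℕ) < chainIndex P A :=
  ⟨fun h => Nat.le_findGreatest r.isLt h,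
    fun h => (chainSet_mono P h).trans chainSet_chainIndex_subset⟩

theorem not_subset_of_chainIndex_lt (hk : chainIndex P A < m) :
    ¬ P ⟨chainIndex P A, hk⟩ ⊆ A := by
  intro hPA
  refine Nat.findGreatest_is_greatest (Nat.lt_succ_self _) hk
    ((chainSet_subset_iff P).2 fun t ht => ?_)
  rcases (Nat.lt_succ_iff.1 ht).lt_or_eq with ht | ht
  · exact (chainSet_subset_iff P).1 chainSet_chainIndex_subset t ht
  · rwa [show t = ⟨chainIndex P A, hk⟩ from Fin.ext ht]

end ChainIndex

theorem sum_filter_val_lt_sub {G : Type*} [AddCommGroup G] (F : ℕ → G) {m k : ℕ} (hk : k ≤ m) :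
    ∑ r ∈ univ.filter (fun r : Fin m => (r : ℕ) < k), (F (r + 1) - F r) = F k - F 0 := by
  rw [sum_filter, Fin.sum_univ_eq_sum_range (fun i => if i < k then F (i + 1) - F i else 0),
    ← sum_filter, ← sum_range_sub]
  congr 1
  ext i
  simp only [mem_filter, mem_range]
  omega

namespace IsMinitiveOn

variable {β : Type*} [LinearOrder β] {N : Set Ω → β} {m : ℕ} {P : Fin m → Set Ω}

theorem apply_chainSet_of_lt (hN : IsMinitiveOn N 𝒜) (h𝒜 : IsSetAlgebra (𝒜 : Set (Set Ω)))
    (hP : ∀ t, P t ∈ 𝒜) (hdisj : Pairwise (Disjoint on P)) (hcover : ⋃ t, P t = Set.univ)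
    (hg : Monotone fun t => N (P t)ᶜ) {k : ℕ} (hk : k < m) :
    N (chainSet P k) = N (P ⟨k, hk⟩)ᶜ := by
  have hne : (univ.filter fun t : Fin m => k ≤ t).Nonempty := ⟨⟨k, hk⟩, by simp⟩
  rw [chainSet_eq_biInter_compl P hdisj hcover,
    hN.apply_biInter h𝒜 hne fun t _ => h𝒜.compl_mem (hP t)]
  exact le_antisymm (inf'_le _ (by simp))
    (le_inf' _ _ fun t ht => hg (Fin.le_iff_val_le_val.2 (by simpa using ht)))

theorem apply_eq_apply_chainSet_chainIndex (hN : IsMinitiveOn N 𝒜)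
    (h𝒜 : IsSetAlgebra (𝒜 : Set (Set Ω))) (hP : ∀ t, IsAtomOf 𝒜 (P t))
    (hdisj : Pairwise (Disjoint on P)) (hcover : ⋃ t, P t = Set.univ)
    (hg : Monotone fun t => N (P t)ᶜ) {A : Set Ω} (hA : A ∈ 𝒜) :
    N A = N (chainSet P (chainIndex P A)) := by
  rcases (chainIndex_le (P := P) (A := A)).eq_or_lt with heq | hlt
  · have hAuniv : Set.univ ⊆ A := by
      simpa only [heq, chainSet_eq_univ P hcover] using
        chainSet_chainIndex_subset (P := P) (A := A)
    rw [heq, chainSet_eq_univ P hcover, Set.univ_subset_iff.1 hAuniv]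
  · have hAc : A ⊆ (P ⟨_, hlt⟩)ᶜ := Set.subset_compl_comm.1
      (((hP _).subset_or_subset_compl h𝒜 hA).resolve_left (not_subset_of_chainIndex_lt hlt))
    refine le_antisymm ?_
      (hN.mono (chainSet_mem h𝒜 (fun t => (hP t).1) hdisj hcover _) hA chainSet_chainIndex_subset)
    calc N A ≤ N (P ⟨_, hlt⟩)ᶜ := hN.mono hA (h𝒜.compl_mem (hP _).1) hAc
      _ = N (chainSet P (chainIndex P A)) :=
        (hN.apply_chainSet_of_lt h𝒜 (fun t => (hP t).1) hdisj hcover hg hlt).symm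

theorem eq_sum_filter_iUnion_Iic_subset {G : Type*} [AddCommGroup G] [LinearOrder G]
    {N : Set Ω → G} (hN : IsMinitiveOn N 𝒜) (h𝒜 : IsSetAlgebra (𝒜 : Set (Set Ω)))
    (hP : ∀ t, IsAtomOf 𝒜 (P t)) (hdisj : Pairwise (Disjoint on P))
    (hcover : ⋃ t, P t = Set.univ) (hg : Monotone fun t => N (P t)ᶜ) (h0 : N ∅ = 0) :
    ∀ A ∈ 𝒜, N A = ∑ r ∈ univ.filter (fun r : Fin m => ⋃ t ∈ Iic r, P t ⊆ A),
      (N (chainSet P (r + 1)) - N (chainSet P r)) := by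
  intro A hA
  simp_rw [iUnion_Iic_eq_chainSet, chainSet_succ_subset_iff]
  rw [sum_filter_val_lt_sub (fun k => N (chainSet P k)) chainIndex_le, chainSet_zero, h0,
    sub_zero]
  exact hN.apply_eq_apply_chainSet_chainIndex h𝒜 hP hdisj hcover hg hA

end IsMinitiveOn

theorem isMinitiveOn_sum_filter_subset {ι M : Type*} [Fintype ι] [LinearOrder ι]
    [AddCommMonoid M] [LinearOrder M] [IsOrderedAddMonoid M] {D : ι → Set Ω} (hD : Monotone D)
    {x : ι → M} (hx : ∀ r, 0 ≤ x r) (𝒜 : Finset (Set Ω)) :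
    IsMinitiveOn (fun A => ∑ r ∈ univ.filter (fun r => D r ⊆ A), x r) 𝒜 := by
  intro A _ B _
  dsimp only
  have hlower : ∀ X : Set Ω, IsLowerSet {r | D r ⊆ X} := fun X _ _ hba ha => (hD hba).trans ha
  rcases (hlower A).total (hlower B) with hAB | hBA
  · rw [filter_congr fun r _ => Set.subset_inter_iff.trans (and_iff_left_of_imp (@hAB r))]
    exact (min_eq_left (sum_le_sum_of_subset_of_nonneg
      (monotone_filter_right _ fun r _ => @hAB r) fun r _ _ => hx r)).symm
  · rw [filter_congr fun r _ => Set.subset_inter_iff.trans (and_iff_right_of_imp (@hBA r))]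
    exact (min_eq_right (sum_le_sum_of_subset_of_nonneg
      (monotone_filter_right _ fun r _ => @hBA r) fun r _ _ => hx r)).symm

end

theorem stmt_16_general {Ω : Type*} (𝒜 : Finset (Set Ω))
    (hEmp : ∅ ∈ 𝒜)
    (hcompl : ∀ A ∈ 𝒜, Aᶜ ∈ 𝒜)
    (hunion : ∀ A ∈ 𝒜, ∀ B ∈ 𝒜, A ∪ B ∈ 𝒜)
    {m : ℕ} (C : Fin m → Set Ω) (hCinj : Function.Injective C)
    (hatom : ∀ r, IsAtomOf 𝒜 (C r))
    (hall : ∀ A : Set Ω, IsAtomOf 𝒜 A → ∃ r, A = C r)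
    (N : Set Ω → ℝ) :
    (N ∅ = 0 ∧ N Set.univ = 1 ∧
        ∀ A ∈ 𝒜, ∀ B ∈ 𝒜, N (A ∩ B) = min (N A) (N B)) ↔
      ∃ σ : Equiv.Perm (Fin m), ∃ x : Fin m → ℝ,
        (∀ r, 0 ≤ x r) ∧ (∑ r, x r) = 1 ∧
        ∀ A ∈ 𝒜, N A =
          ∑ r ∈ Finset.univ.filter
            (fun r : Fin m => (⋃ t ∈ Finset.Iic r, C (σ t)) ⊆ A), x r := by
  have h𝒜 : IsSetAlgebra (𝒜 : Set (Set Ω)) :=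
    ⟨hEmp, fun A hA => hcompl A hA, fun A B hA hB => hunion A hA B hB⟩
  constructor
  · rintro ⟨h0, h1, hN : IsMinitiveOn N 𝒜⟩
    set σ := Tuple.sort fun r => N (C r)ᶜ
    have hdisj : Pairwise (Disjoint on C ∘ σ) := fun s t hst =>
      (hatom _).disjoint h𝒜 (hatom _) ((hCinj.comp σ.injective).ne hst)
    have hcover : ⋃ t, C (σ t) = Set.univ := by
      rw [σ.surjective.iUnion_comp C, iUnion_eq_univ_of_forall_isAtomOf h𝒜 hall]
    have hmem := chainSet_mem h𝒜 (fun t => (hatom (σ t)).1) hdisj hcover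
    have hrep := hN.eq_sum_filter_iUnion_Iic_subset h𝒜 (fun t => hatom (σ t)) hdisj hcover
      (Tuple.monotone_sort fun r => N (C r)ᶜ) h0
    refine ⟨σ, _, fun r => sub_nonneg.2 (hN.mono (hmem _) (hmem _) (chainSet_mono _ r.val.le_succ)),
      ?_, hrep⟩
    simpa [h1] using (hrep _ h𝒜.univ_mem).symm
  · rintro ⟨σ, x, hx0, hx1, hrep⟩
    have hchain : Monotone fun r => ⋃ t ∈ Finset.Iic r, C (σ t) := fun r s hrs =>
      Set.biUnion_mono (Finset.Iic_subset_Iic.2 hrs) fun _ _ => subset_rfl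
    refine ⟨?_, ?_, fun A hA B hB => ?_⟩
    · rw [hrep ∅ hEmp]
      refine Finset.sum_eq_zero fun r hr => ((hatom (σ r)).2.1 (Set.subset_empty_iff.1 ?_)).elim
      exact (Set.subset_iUnion₂ (s := fun t _ => C (σ t)) r (Finset.mem_Iic.2 le_rfl)).trans
        (Finset.mem_filter.1 hr).2
    · simpa [hrep _ h𝒜.univ_mem] using hx1
    · rw [hrep _ (h𝒜.inter_mem hA hB), hrep A hA, hrep B hB]
      exact isMinitiveOn_sum_filter_subset hchain hx0 𝒜 A hA B hB

theorem stmt_16 {Ω : Type*} [Nonempty Ω] (𝒜 : Finset (Set Ω))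
    (hEmp : ∅ ∈ 𝒜) (hUniv : Set.univ ∈ 𝒜)
    (hcompl : ∀ A ∈ 𝒜, Aᶜ ∈ 𝒜)
    (hinter : ∀ A ∈ 𝒜, ∀ B ∈ 𝒜, A ∩ B ∈ 𝒜)
    (hunion : ∀ A ∈ 𝒜, ∀ B ∈ 𝒜, A ∪ B ∈ 𝒜)
    {m : ℕ} (C : Fin m → Set Ω) (hCinj : Function.Injective C)
    (hatom : ∀ r, IsAtomOf 𝒜 (C r))
    (hall : ∀ A : Set Ω, IsAtomOf 𝒜 A → ∃ r, A = C r)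
    (N : Set Ω → ℝ) (hN01 : ∀ A ∈ 𝒜, N A ∈ Set.Icc (0 : ℝ) 1) :
    (N ∅ = 0 ∧ N Set.univ = 1 ∧
        ∀ A ∈ 𝒜, ∀ B ∈ 𝒜, N (A ∩ B) = min (N A) (N B)) ↔
      ∃ σ : Equiv.Perm (Fin m), ∃ x : Fin m → ℝ,
        (∀ r, 0 ≤ x r) ∧ (∑ r, x r) = 1 ∧
        ∀ A ∈ 𝒜, N A =
          ∑ r ∈ Finset.univ.filter
            (fun r : Fin m => (⋃ t ∈ Finset.Iic r, C (σ t)) ⊆ A), x r :=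
  stmt_16_general 𝒜 hEmp hcompl hunion C hCinj hatom hall N
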